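/- arXiv:1603.05810 — 3 statements merged into one kernel-verified Lean document; each statement's English description precedes it below -/
import Mathlib

section
/- (log 2)² = 2·Li₂(−1/8) − 4·Li₂(1/4) − 4·Li₂(−1/2), where Li₂(x) = ∑_{k≥1} x^k/k². -/
noncomputable def Li (s : ℕ) (z : ℂ) : ℂ := ∑' k : ℕ, z ^ (k + 1) / ((k : ℂ) + 1) ^ s

noncomputable def LiR (s : ℕ) (x : ℝ) : ℝ := ∑' k : ℕ, x ^ (k + 1) / ((k : ℝ) + 1) ^ s

/-!
Put `a = -(1-y)²/(4y)`, `b = (1-y)/2`, `c = -(1-y)/(2y)`. Termwise differentiation gives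
`x · Li₂'(x) = -log(1-x)` for `|x| < 1`, and `1-a = ((1+y)/2)²/y`, `1-b = (1+y)/2`,
`1-c = ((1+y)/2)/y`, while the logarithmic derivatives of `a, b, c` are `-2/(1-y) - 1/y`,
`-1/(1-y)`, `-1/(1-y) - 1/y`. Hence the derivative of `2 Li₂(a) - 4 Li₂(b) - 4 Li₂(c) - log² y`
is a combination of `log((1+y)/2)` and `log y` whose coefficients cancel identically. The function is
therefore constant on `(1/3, 1]`, where `a, b, c ∈ (-1, 1)`; it vanishes at `y = 1`, and `y = 1/2`
gives the identity.
-/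

open Real Set

lemma hasDerivAt_LiR_succ (s : ℕ) {x : ℝ} (hx : |x| < 1) :
    HasDerivAt (LiR (s + 1)) (∑' k : ℕ, x ^ k / ((k : ℝ) + 1) ^ s) x := by
  obtain ⟨r, hxr, hr⟩ := exists_between hx
  have hr0 : 0 < r := (abs_nonneg x).trans_lt hxr
  have hterm (k : ℕ) (y : ℝ) : HasDerivAt (fun z : ℝ => z ^ (k + 1) / ((k : ℝ) + 1) ^ (s + 1))
      (y ^ k / ((k : ℝ) + 1) ^ s) y := by
    refine ((hasDerivAt_pow (k + 1) y).div_const _).congr_deriv ?_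
    rw [Nat.add_sub_cancel, pow_succ]
    push_cast
    field_simp
  have hbound (k : ℕ) (y : ℝ) (hy : y ∈ Ioo (-r) r) : ‖y ^ k / ((k : ℝ) + 1) ^ s‖ ≤ r ^ k := by
    rw [norm_div, norm_pow, Real.norm_eq_abs, Real.norm_eq_abs,
      abs_of_pos (by positivity : (0 : ℝ) < ((k : ℝ) + 1) ^ s)]
    calc |y| ^ k / ((k : ℝ) + 1) ^ s ≤ |y| ^ k :=
          div_le_self (by positivity) (one_le_pow₀ (by linarith [k.cast_nonneg (α := ℝ)]))
      _ ≤ r ^ k := pow_le_pow_left₀ (abs_nonneg y) (abs_lt.mpr hy).le k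
  exact hasDerivAt_tsum_of_isPreconnected (summable_geometric_of_lt_one hr0.le hr)
    isOpen_Ioo isPreconnected_Ioo (fun k y _ => hterm k y) hbound (y₀ := 0)
    ⟨neg_lt_zero.mpr hr0, hr0⟩ (by simp) (abs_lt.mp hxr)

lemma mul_tsum_pow_div_eq_LiR (s : ℕ) (x : ℝ) :
    x * ∑' k : ℕ, x ^ k / ((k : ℝ) + 1) ^ s = LiR s x := by
  rw [LiR, ← tsum_mul_left]
  congr 1 with k
  rw [pow_succ', mul_div_assoc]

lemma LiR_one {x : ℝ} (hx : |x| < 1) : LiR 1 x = -log (1 - x) := by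
  simpa [LiR] using (hasSum_pow_div_log_of_abs_lt_one hx).tsum_eq

@[simp]
lemma LiR_zero_right (s : ℕ) : LiR s 0 = 0 := by
  simp [LiR]

lemma continuousAt_LiR_succ (s : ℕ) {x : ℝ} (hx : |x| < 1) : ContinuousAt (LiR (s + 1)) x :=
  (hasDerivAt_LiR_succ s hx).continuousAt

-- The derivative of `f` is written as `f y * g` so that no division by `f y`, which may vanish,
-- is needed.
lemma HasDerivAt.LiR_succ (s : ℕ) {f : ℝ → ℝ} {g y : ℝ} (hf : HasDerivAt f (f y * g) y)
    (hfy : |f y| < 1) : HasDerivAt (fun t => LiR (s + 1) (f t)) (LiR s (f y) * g) y := by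
  rw [← mul_tsum_pow_div_eq_LiR]
  exact ((hasDerivAt_LiR_succ s hfy).comp y hf).congr_deriv (by ring)

noncomputable def kummerDefect (y : ℝ) : ℝ :=
  2 * LiR 2 (-(1 - y) ^ 2 / (4 * y)) - 4 * LiR 2 ((1 - y) / 2) - 4 * LiR 2 (-(1 - y) / (2 * y))
    - log y ^ 2

lemma abs_kummer_args_lt_one {y : ℝ} (hy : y ∈ Ioc (1 / 3) 1) :
    |-(1 - y) ^ 2 / (4 * y)| < 1 ∧ |(1 - y) / 2| < 1 ∧ |-(1 - y) / (2 * y)| < 1 := by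
  obtain ⟨h1, h2⟩ := hy
  have hy0 : 0 < y := by linarith
  refine ⟨?_, ?_, ?_⟩ <;> rw [abs_lt] <;> refine ⟨?_, ?_⟩
  all_goals first
    | rw [lt_div_iff₀ (by positivity)]; nlinarith
    | rw [div_lt_iff₀ (by positivity)]; nlinarith

lemma hasDerivAt_kummerDefect {y : ℝ} (hy : y ∈ Ioo (1 / 3) 1) : HasDerivAt kummerDefect 0 y := by
  obtain ⟨ha, hb, hc⟩ := abs_kummer_args_lt_one (Ioo_subset_Ioc_self hy)
  have hy0 : y ≠ 0 := by linarith [hy.1]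
  have hy1 : 1 - y ≠ 0 := by linarith [hy.2]
  have hy2 : 0 < (1 + y) / 2 := by linarith [hy.1]
  -- each argument is written as itself times its logarithmic derivative
  have da : HasDerivAt (fun t => -(1 - t) ^ 2 / (4 * t))
      (-(1 - y) ^ 2 / (4 * y) * (-2 / (1 - y) - 1 / y)) y := by
    refine ((((hasDerivAt_id' y).const_sub 1).fun_pow 2).fun_neg.div
      ((hasDerivAt_id' y).const_mul 4) (by simpa using hy0)).congr_deriv ?_
    field_simp
    ring
  have db : HasDerivAt (fun t => (1 - t) / 2) ((1 - y) / 2 * (-1 / (1 - y))) y := by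
    refine (((hasDerivAt_id' y).const_sub 1).div_const 2).congr_deriv ?_
    field_simp
  have dc : HasDerivAt (fun t => -(1 - t) / (2 * t))
      (-(1 - y) / (2 * y) * (-1 / (1 - y) - 1 / y)) y := by
    refine (((hasDerivAt_id' y).const_sub 1).fun_neg.div
      ((hasDerivAt_id' y).const_mul 2) (by simpa using hy0)).congr_deriv ?_
    field_simp
    ring
  refine ((((da.LiR_succ 1 ha).const_mul 2).sub ((db.LiR_succ 1 hb).const_mul 4)).sub
    ((dc.LiR_succ 1 hc).const_mul 4) |>.sub ((hasDerivAt_log hy0).pow 2)).congr_deriv ?_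
  rw [LiR_one ha, LiR_one hb, LiR_one hc,
    show 1 - -(1 - y) ^ 2 / (4 * y) = ((1 + y) / 2) ^ 2 / y by field_simp; ring,
    show 1 - (1 - y) / 2 = (1 + y) / 2 by ring,
    show 1 - -(1 - y) / (2 * y) = (1 + y) / 2 / y by field_simp; ring,
    log_div (by positivity) hy0, log_div hy2.ne' hy0, log_pow]
  push_cast
  ring

lemma continuousOn_kummerDefect : ContinuousOn kummerDefect (Ioc (1 / 3) 1) := by
  intro y hy
  obtain ⟨ha, hb, hc⟩ := abs_kummer_args_lt_one hy
  have hy0 : y ≠ 0 := by linarith [hy.1]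
  refine ContinuousAt.continuousWithinAt ?_
  have hLa := (continuousAt_LiR_succ 1 ha).comp (f := fun t : ℝ => -(1 - t) ^ 2 / (4 * t))
    (by fun_prop (disch := positivity))
  have hLb := (continuousAt_LiR_succ 1 hb).comp (f := fun t : ℝ => (1 - t) / 2) (by fun_prop)
  have hLc := (continuousAt_LiR_succ 1 hc).comp (f := fun t : ℝ => -(1 - t) / (2 * t))
    (by fun_prop (disch := positivity))
  exact (((hLa.const_mul 2).sub (hLb.const_mul 4)).sub (hLc.const_mul 4)).sub
    ((continuousAt_log hy0).pow 2)

lemma kummerDefect_eq_zero {y : ℝ} (hy : y ∈ Ioc (1 / 3) 1) : kummerDefect y = 0 := by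
  have hconst := constant_of_has_deriv_right_zero
    (continuousOn_kummerDefect.mono (Icc_subset_Ioc_iff hy.2 |>.mpr ⟨hy.1, le_rfl⟩))
    (fun x hx => (hasDerivAt_kummerDefect ⟨hy.1.trans_le hx.1, hx.2⟩).hasDerivWithinAt)
    1 ⟨hy.2, le_rfl⟩
  rw [← hconst]
  simp [kummerDefect]

theorem stmt2 : (Real.log 2) ^ 2 = 2 * LiR 2 (-1/8) - 4 * LiR 2 (1/4) - 4 * LiR 2 (-1/2) := by
  have h := kummerDefect_eq_zero (y := 1 / 2) ⟨by norm_num, by norm_num⟩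
  have hlog : Real.log (1 / 2) = -Real.log 2 := by simp
  norm_num [kummerDefect, hlog] at h ⊢
  linarith
end

section
/- π² = 72·Re Li₂((1/2)·e^{iπ/3}) − 18·Li₂(1/4), where Li₂(z) = ∑_{k≥1} z^k/k² for complex z with |z| ≤ 1. -/
open Real Set

section Series

variable {𝕜 : Type*} [RCLike 𝕜] {z : 𝕜}

theorem norm_pow_div_sq_le (hz : ‖z‖ ≤ 1) (n : ℕ) : ‖z ^ n / (n : 𝕜) ^ 2‖ ≤ 1 / (n : ℝ) ^ 2 := by
  rw [norm_div, norm_pow, norm_pow, RCLike.norm_natCast]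
  exact div_le_div_of_nonneg_right (pow_le_one₀ (norm_nonneg z) hz) (sq_nonneg _)

theorem summable_pow_div_sq (hz : ‖z‖ ≤ 1) : Summable fun n : ℕ => z ^ n / (n : 𝕜) ^ 2 :=
  .of_norm_bounded (Real.summable_one_div_nat_pow.mpr one_lt_two) (norm_pow_div_sq_le hz)

-- The `n = 0` term is `z ^ 0 / 0 ^ 2 = 0`.
theorem hasSum_pow_div_sq (hz : ‖z‖ ≤ 1) :
    HasSum (fun n : ℕ => z ^ n / (n : 𝕜) ^ 2) (∑' k : ℕ, z ^ (k + 1) / ((k : 𝕜) + 1) ^ 2) := by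
  convert (summable_pow_div_sq hz).hasSum using 1
  rw [(summable_pow_div_sq hz).tsum_eq_zero_add]
  simp

end Series

theorem hasSum_Li_two {z : ℂ} (hz : ‖z‖ ≤ 1) :
    HasSum (fun n : ℕ => z ^ n / (n : ℂ) ^ 2) (Li 2 z) :=
  hasSum_pow_div_sq hz

theorem hasSum_LiR_two {x : ℝ} (hx : |x| ≤ 1) :
    HasSum (fun n : ℕ => x ^ n / (n : ℝ) ^ 2) (LiR 2 x) :=
  hasSum_pow_div_sq hx

theorem LiR_two_zero : LiR 2 0 = 0 := by
  simp [LiR]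

theorem LiR_two_one : LiR 2 1 = π ^ 2 / 6 :=
  (hasSum_LiR_two (by simp)).unique (by simpa using hasSum_zeta_two)

theorem continuousOn_LiR_two : ContinuousOn (LiR 2) (Icc (-1) 1) := by
  have hc : ContinuousOn (fun x : ℝ => ∑' n : ℕ, x ^ n / (n : ℝ) ^ 2) (Icc (-1) 1) :=
    continuousOn_tsum (fun n => (continuous_pow n).continuousOn.div_const _)
      (Real.summable_one_div_nat_pow.mpr one_lt_two)
      fun n x hx => norm_pow_div_sq_le (abs_le.mpr hx) n
  exact hc.congr fun x hx => ((hasSum_LiR_two (abs_le.mpr hx)).tsum_eq).symm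

theorem hasSum_ite_dvd_pow_div_sq {x : ℝ} (hx : |x| ≤ 1) {d : ℕ} (hd : d ≠ 0) :
    HasSum (fun n : ℕ => if d ∣ n then x ^ n / (n : ℝ) ^ 2 else 0) (LiR 2 (x ^ d) / d ^ 2) := by
  have hxd : |x ^ d| ≤ 1 := by rw [abs_pow]; exact pow_le_one₀ (abs_nonneg x) hx
  rw [← (mul_right_injective₀ hd).hasSum_iff fun n hn => if_neg fun ⟨m, hm⟩ => hn ⟨m, hm.symm⟩]
  refine ((hasSum_LiR_two hxd).div_const ((d : ℝ) ^ 2)).congr_fun fun m => ?_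
  simp [pow_mul, mul_pow, div_div, mul_comm]

theorem LiR_two_add_LiR_two_neg {x : ℝ} (hx : |x| ≤ 1) :
    LiR 2 x + LiR 2 (-x) = LiR 2 (x ^ 2) / 2 := by
  have hsum : HasSum (fun n : ℕ => x ^ n / (n : ℝ) ^ 2 + (-x) ^ n / (n : ℝ) ^ 2)
      (2 * (LiR 2 (x ^ 2) / (2 : ℕ) ^ 2)) := by
    refine ((hasSum_ite_dvd_pow_div_sq hx two_ne_zero).mul_left 2).congr_fun fun n => ?_
    rcases Nat.even_or_odd n with h | h
    · rw [if_pos h.two_dvd, h.neg_pow]; ring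
    · rw [if_neg (Nat.not_even_iff_odd.mpr h ∘ even_iff_two_dvd.mpr), h.neg_pow]; ring
  rw [((hasSum_LiR_two hx).add (hasSum_LiR_two (by rwa [abs_neg]))).unique hsum]
  push_cast; ring

theorem two_mul_cos_nat_mul_pi_div_three (n : ℕ) :
    2 * cos (n * (π / 3)) = (-1) ^ n * ((if 3 ∣ n then 3 else 0) - 1) := by
  obtain ⟨q, r, hr, rfl⟩ : ∃ q r, r < 3 ∧ n = r + 3 * q :=
    ⟨n / 3, n % 3, Nat.mod_lt _ three_pos, (Nat.mod_add_div n 3).symm⟩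
  have hcos : cos (((r + 3 * q : ℕ) : ℝ) * (π / 3)) = (-1) ^ q * cos (r * (π / 3)) := by
    rw [← cos_add_nat_mul_pi]; push_cast; ring_nf
  have hsign : (-1 : ℝ) ^ (r + 3 * q) = (-1) ^ q * (-1) ^ r := by
    rw [pow_add, pow_mul]; norm_num; ring
  have hdvd : 3 ∣ r + 3 * q ↔ 3 ∣ r := by omega
  have hbase : 2 * cos (r * (π / 3)) = (-1) ^ r * ((if 3 ∣ r then 3 else 0) - 1) := by
    interval_cases r
    · norm_num
    · norm_num [cos_pi_div_three]
    · rw [show ((2 : ℕ) : ℝ) * (π / 3) = π - π / 3 by push_cast; ring, cos_pi_sub,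
        cos_pi_div_three]
      norm_num
  rw [hcos, hsign, if_congr hdvd rfl rfl, mul_left_comm, hbase]
  ring

theorem two_mul_re_Li_two_ofReal_mul_exp {x : ℝ} (hx : |x| ≤ 1) :
    2 * (Li 2 (x * Complex.exp (π / 3 * Complex.I))).re = LiR 2 ((-x) ^ 3) / 3 - LiR 2 (-x) := by
  have hz : ‖(x : ℂ) * Complex.exp (π / 3 * Complex.I)‖ ≤ 1 := by
    rw [norm_mul, Complex.norm_real, ← Complex.ofReal_ofNat, ← Complex.ofReal_div,
      Complex.norm_exp_ofReal_mul_I, mul_one]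
    exact hx
  have hterm (n : ℕ) : 2 * (((x : ℂ) * Complex.exp (π / 3 * Complex.I)) ^ n / (n : ℂ) ^ 2).re
      = 3 * (if 3 ∣ n then (-x) ^ n / (n : ℝ) ^ 2 else 0) - (-x) ^ n / (n : ℝ) ^ 2 := by
    have hpow : ((x : ℂ) * Complex.exp (π / 3 * Complex.I)) ^ n / (n : ℂ) ^ 2
        = ((x ^ n / (n : ℝ) ^ 2 : ℝ) : ℂ) * Complex.exp ((n * (π / 3) : ℝ) * Complex.I) := by
      rw [mul_pow, ← Complex.exp_nat_mul]; push_cast; ring_nf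
    rw [hpow, Complex.re_ofReal_mul, Complex.exp_ofReal_mul_I_re, neg_pow, mul_comm _ (cos _),
      ← mul_assoc, two_mul_cos_nat_mul_pi_div_three]
    split_ifs <;> ring
  have hx' : |-x| ≤ 1 := by rwa [abs_neg]
  have hsum :=
    ((hasSum_ite_dvd_pow_div_sq hx' three_ne_zero).mul_left 3).sub (hasSum_LiR_two hx')
  rw [((Complex.hasSum_re (hasSum_Li_two hz)).mul_left 2).unique (hsum.congr_fun hterm)]
  push_cast; ring

theorem eq_of_hasDerivAt_eq_zero {f : ℝ → ℝ} {a b : ℝ} (hab : a ≤ b)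
    (hf : ContinuousOn f (Icc a b)) (hf' : ∀ y ∈ Ioo a b, HasDerivAt f 0 y) : f a = f b := by
  rcases hab.eq_or_lt with rfl | hab
  · rfl
  obtain ⟨c, -, hc⟩ := exists_hasDerivAt_eq_slope f (fun _ => 0) hab hf hf'
  rw [eq_div_iff (sub_ne_zero.mpr hab.ne')] at hc
  linarith

theorem hasDerivAt_LiR_two {x : ℝ} (hx : |x| < 1) (hx0 : x ≠ 0) :
    HasDerivAt (LiR 2) (-log (1 - x) / x) x := by
  obtain ⟨r, hxr, hr1⟩ := exists_between hx
  have hsum : HasSum (fun k : ℕ => x ^ k / ((k : ℝ) + 1)) (-log (1 - x) / x) :=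
    ((hasSum_pow_div_log_of_abs_lt_one hx).div_const x).congr_fun fun k => by
      field_simp; ring
  rw [← hsum.tsum_eq]
  refine hasDerivAt_tsum_of_isPreconnected
    (g := fun (k : ℕ) (y : ℝ) => y ^ (k + 1) / ((k : ℝ) + 1) ^ 2)
    (g' := fun (k : ℕ) (y : ℝ) => y ^ k / ((k : ℝ) + 1))
    (summable_geometric_of_lt_one ((abs_nonneg x).trans hxr.le) hr1) isOpen_Ioo
    (convex_Ioo (-r) r).isPreconnected (fun k y _ => ?_) (fun k y hy => ?_) (y₀ := 0)
    ⟨by linarith [abs_nonneg x], by linarith [abs_nonneg x]⟩ (by simp) (abs_lt.mp hxr)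
  · refine ((hasDerivAt_pow (k + 1) y).div_const (((k : ℝ) + 1) ^ 2)).congr_deriv ?_
    rw [Nat.add_sub_cancel]
    push_cast
    field_simp
  · rw [norm_div, norm_pow, Real.norm_eq_abs, Real.norm_of_nonneg (by positivity)]
    calc |y| ^ k / ((k : ℝ) + 1)
        ≤ |y| ^ k := div_le_self (by positivity) (by linarith [k.cast_nonneg (α := ℝ)])
      _ ≤ r ^ k := pow_le_pow_left₀ (abs_nonneg y) (abs_le.mpr ⟨hy.1.le, hy.2.le⟩) k

theorem continuousAt_log_mul_log_one_sub {y : ℝ} (hy : y ≠ 1) :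
    ContinuousAt (fun t => log t * log (1 - t)) y := by
  rcases eq_or_ne y 0 with rfl | hy0
  · -- `log t * log (1 - t) = (t log t) * (log (1 - t) / t)`, and the second factor extends
    -- continuously to `t = 0` as a difference quotient.
    have hfac : (fun t => log t * log (1 - t))
        = fun t => t * log t * dslope (fun t => log (1 - t)) 0 t := by
      ext t
      rcases eq_or_ne t 0 with rfl | ht
      · simp
      · rw [dslope_of_ne _ ht, slope_def_field]
        field_simp
        simp only [sub_zero, log_one]
        ring
    have hdiff : DifferentiableAt ℝ (fun t => log (1 - t)) 0 :=
      (differentiableAt_const _ |>.sub differentiableAt_id).log (by norm_num)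
    rw [hfac]
    exact continuous_mul_log.continuousAt.mul (continuousAt_dslope_same.mpr hdiff)
  · exact (continuousAt_id.log hy0).mul
      ((continuousAt_const.sub continuousAt_id).log (sub_ne_zero.mpr hy.symm))

theorem LiR_two_add_LiR_two_one_sub {x : ℝ} (hx : x ∈ Icc 0 1) :
    LiR 2 x + LiR 2 (1 - x) + log x * log (1 - x) = π ^ 2 / 6 := by
  rcases hx.2.eq_or_lt with rfl | hx1
  · simp [LiR_two_zero, LiR_two_one]
  set f : ℝ → ℝ := fun y => LiR 2 y + LiR 2 (1 - y) + log y * log (1 - y)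
  have hcont : ContinuousOn f (Icc 0 x) := by
    refine ((continuousOn_LiR_two.mono ?_).add (continuousOn_LiR_two.comp
      (continuousOn_const.sub continuousOn_id) ?_)).add fun y hy =>
        (continuousAt_log_mul_log_one_sub (by linarith [hy.2])).continuousWithinAt
    · exact Icc_subset_Icc (by norm_num) hx1.le
    · intro y hy
      simp only [Pi.sub_apply, id]
      exact ⟨by linarith [hy.2], by linarith [hy.1]⟩
  have hderiv (y : ℝ) (hy : y ∈ Ioo 0 x) : HasDerivAt f 0 y := by
    obtain ⟨hy0, hyx⟩ := hy
    have hy1 : 1 - y ≠ 0 := by linarith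
    have hsub : HasDerivAt (fun t : ℝ => 1 - t) (-1) y := by
      simpa using (hasDerivAt_id y).const_sub 1
    have d1 := hasDerivAt_LiR_two (abs_lt.mpr ⟨by linarith, by linarith⟩) hy0.ne'
    have d2 := (hasDerivAt_LiR_two (abs_lt.mpr ⟨by linarith, by linarith⟩) hy1).comp y hsub
    have d3 := (hasDerivAt_log hy0.ne').mul ((hasDerivAt_log hy1).comp y hsub)
    refine ((d1.add d2).add d3).congr_deriv ?_
    rw [sub_sub_cancel, Function.comp_apply]
    field_simp
    ring
  refine (eq_of_hasDerivAt_eq_zero hx.1 hcont hderiv).symm.trans ?_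
  simp [f, LiR_two_zero, LiR_two_one]

theorem LiR_two_div_sub_one_add_LiR_two {x : ℝ} (hx : x ∈ Icc 0 (1 / 2)) :
    LiR 2 (x / (x - 1)) + LiR 2 x + log (1 - x) ^ 2 / 2 = 0 := by
  set f : ℝ → ℝ := fun y => LiR 2 (y / (y - 1)) + LiR 2 y + log (1 - y) ^ 2 / 2
  have hcont : ContinuousOn f (Icc 0 x) := by
    have hIcc : Icc 0 x ⊆ Icc 0 (1 / 2) := Icc_subset_Icc_right hx.2
    have hy1 {y : ℝ} (hy : y ∈ Icc 0 x) : y - 1 < 0 := by linarith [(hIcc hy).2]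
    refine ((continuousOn_LiR_two.comp
      (continuousOn_id.div (continuousOn_id.sub continuousOn_const) fun y hy => (hy1 hy).ne)
      fun y hy => ?_).add
      (continuousOn_LiR_two.mono (hIcc.trans (Icc_subset_Icc (by norm_num) (by norm_num))))).add
      ((((continuousOn_const.sub continuousOn_id).log fun y hy => ?_).pow 2).div_const 2)
    · show y / (y - 1) ∈ Icc (-1) 1
      exact ⟨(le_div_iff_of_neg (hy1 hy)).mpr (by linarith [(hIcc hy).2]),
        (div_nonpos_of_nonneg_of_nonpos hy.1 (hy1 hy).le).trans zero_le_one⟩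
    · simp only [Pi.sub_apply, id]
      linarith [hy1 hy]
  have hderiv (y : ℝ) (hy : y ∈ Ioo 0 x) : HasDerivAt f 0 y := by
    obtain ⟨hy0, hyx⟩ := hy
    have hy1 : y - 1 < 0 := by linarith [hx.2]
    have h1y : 1 - y ≠ 0 := by linarith
    have hq : -1 < y / (y - 1) ∧ y / (y - 1) < 0 :=
      ⟨(lt_div_iff_of_neg hy1).mpr (by linarith [hx.2]), div_neg_of_pos_of_neg hy0 hy1⟩
    have hsub : HasDerivAt (fun t : ℝ => 1 - t) (-1) y := by
      simpa using (hasDerivAt_id y).const_sub 1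
    have hquot : HasDerivAt (fun t : ℝ => t / (t - 1)) (-1 / (y - 1) ^ 2) y := by
      refine ((hasDerivAt_id y).div ((hasDerivAt_id y).sub_const 1) hy1.ne).congr_deriv ?_
      simp only [id]
      field_simp
      ring
    have d1 := (hasDerivAt_LiR_two (abs_lt.mpr ⟨hq.1, by linarith⟩) hq.2.ne).comp y hquot
    have d2 := hasDerivAt_LiR_two (abs_lt.mpr ⟨by linarith, by linarith⟩) hy0.ne'
    have d3 := (((hasDerivAt_log h1y).comp y hsub).pow 2).div_const 2
    refine ((d1.add d2).add d3).congr_deriv ?_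
    have hlog : log (1 - y / (y - 1)) = -log (1 - y) := by
      rw [← log_inv]; congr 1; field_simp [hy1.ne]; ring
    rw [hlog, Function.comp_apply]
    field_simp [hy1.ne]
    ring
  refine (eq_of_hasDerivAt_eq_zero hx.1 hcont hderiv).symm.trans ?_
  simp [f, LiR_two_zero]

theorem stmt3 : Real.pi ^ 2 = 72 * (Li 2 (((1/2 : ℝ) : ℂ) * Complex.exp ((Real.pi / 3) * Complex.I))).re - 18 * LiR 2 (1/4) := by
  have hre := two_mul_re_Li_two_ofReal_mul_exp (x := 1 / 2) (by norm_num [abs_of_pos])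
  have euler := LiR_two_add_LiR_two_one_sub (x := 1 / 2) (by norm_num)
  have dup₂ := LiR_two_add_LiR_two_neg (x := 1 / 2) (by norm_num [abs_of_pos])
  have dup₃ := LiR_two_add_LiR_two_neg (x := 1 / 3) (by norm_num [abs_of_pos])
  have landen₃ := LiR_two_div_sub_one_add_LiR_two (x := 1 / 3) (by norm_num)
  have landen₄ := LiR_two_div_sub_one_add_LiR_two (x := 1 / 4) (by norm_num)
  have landen₉ := LiR_two_div_sub_one_add_LiR_two (x := 1 / 9) (by norm_num)
  rw [show (-(1 / 2 : ℝ)) ^ 3 = -(1 / 8) by norm_num] at hre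
  have log₄ : log 4 = 2 * log 2 := by rw [show (4 : ℝ) = 2 ^ 2 by norm_num, log_pow]; norm_num
  have log₈ : log 8 = 3 * log 2 := by rw [show (8 : ℝ) = 2 ^ 3 by norm_num, log_pow]; norm_num
  have log₉ : log 9 = 2 * log 3 := by rw [show (9 : ℝ) = 3 ^ 2 by norm_num, log_pow]; norm_num
  norm_num [log_div, log₄, log₈, log₉] at euler dup₂ dup₃ landen₃ landen₄ landen₉
  linear_combination (-6) * euler + 12 * dup₂ - 24 * dup₃ + 24 * landen₃ + 24 * landen₄
    - 12 * landen₉ - 36 * hre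
end

section
/- π·log 2/8 = 2·Im Li₂((1/2)e^{iπ/2}) − 2·Im Li₂((1/(2√2))e^{iπ/4}) − Im Li₂((1/(4√2))e^{iπ/4}), where Im Li₂(p·e^{ix}) = ∑_{k≥1} p^k sin(kx)/k². -/
/-!
Landen's identity `Li₂ z + Li₂ (z / (z - 1)) = -log (1 - z) ^ 2 / 2` holds on `‖z‖ < 1, re z < 1/2`:
both sides vanish at `0` and have equal derivatives, since `z * Li₂' z = -log (1 - z)`.
It links `Li₂` at `(1 + i)/4`, `(1 + i)/8` and `-i/2` to `Li₂` at `w = -(1 + 2i)/5`, `conj (w²)` and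
`-w`. The duplication formula `Li₂ w + Li₂ (-w) = Li₂ (w²) / 2` and `Li₂ (conj z) = conj (Li₂ z)`
make these auxiliary values cancel in the imaginary parts, leaving imaginary parts of squared
logarithms, i.e. products of `log 2`, `log 5` and `arctan (1/2)`, `arctan (1/3)`, `arctan (1/7)`;
Machin-type relations between these arctangents finish the computation.
-/

open Complex ComplexConjugate
open scoped Real

lemma one_le_norm_natCast_add_one (k : ℕ) : 1 ≤ ‖(k : ℂ) + 1‖ := by
  rw [← Nat.cast_add_one, norm_natCast]
  exact_mod_cast Nat.le_add_left 1 k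

lemma norm_div_natCast_add_one_pow_le (s k : ℕ) (z : ℂ) : ‖z / ((k : ℂ) + 1) ^ s‖ ≤ ‖z‖ := by
  rw [norm_div, norm_pow]
  exact div_le_self (norm_nonneg z) (one_le_pow₀ (one_le_norm_natCast_add_one k))

lemma summable_Li_series (s : ℕ) {z : ℂ} (hz : ‖z‖ < 1) :
    Summable fun k : ℕ => z ^ (k + 1) / ((k : ℂ) + 1) ^ s := by
  refine .of_norm_bounded
    ((summable_nat_add_iff 1).2 (summable_geometric_of_lt_one (norm_nonneg z) hz)) fun k => ?_
  simpa using norm_div_natCast_add_one_pow_le s k (z ^ (k + 1))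

lemma Li_zero (s : ℕ) : Li s 0 = 0 := by
  simp [Li]

lemma Li_conj (s : ℕ) (z : ℂ) : Li s (conj z) = conj (Li s z) := by
  simp [Li, conj_tsum]

lemma Li_one {z : ℂ} (hz : ‖z‖ < 1) : Li 1 z = -log (1 - z) := by
  simpa [Li] using (hasSum_taylorSeries_neg_log' hz).tsum_eq

lemma Li_add_Li_neg (s : ℕ) {z : ℂ} (hz : ‖z‖ < 1) :
    Li s z + Li s (-z) = 2 * Li s (z ^ 2) / 2 ^ s := by
  have hz2 : ‖z ^ 2‖ < 1 := by rw [norm_pow]; exact pow_lt_one₀ (norm_nonneg z) hz two_ne_zero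
  have hsum := (summable_Li_series s hz).hasSum.add
    (summable_Li_series s (z := -z) (by rwa [norm_neg])).hasSum
  refine hsum.unique ?_
  rw [← zero_add (2 * Li s (z ^ 2) / 2 ^ s), mul_div_right_comm]
  refine HasSum.even_add_odd ?_ ?_
  · convert hasSum_zero with m
    rw [← add_div, Odd.neg_pow ⟨m, rfl⟩, add_neg_cancel, zero_div]
  · have hodd : ∀ m : ℕ, z ^ (2 * m + 1 + 1) / ((↑(2 * m + 1) : ℂ) + 1) ^ s
        + (-z) ^ (2 * m + 1 + 1) / ((↑(2 * m + 1) : ℂ) + 1) ^ s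
        = 2 / 2 ^ s * ((z ^ 2) ^ (m + 1) / ((m : ℂ) + 1) ^ s) := fun m => by
      rw [Even.neg_pow ⟨m + 1, by ring⟩, ← pow_mul]
      push_cast
      rw [show (2 * (m : ℂ) + 1 + 1) = 2 * (m + 1) by ring, mul_pow]
      ring
    simpa only [hodd, Li] using (summable_Li_series s hz2).hasSum.mul_left (2 / 2 ^ s)

lemma hasDerivAt_Li (s : ℕ) {z : ℂ} (hz : ‖z‖ < 1) :
    HasDerivAt (Li (s + 1)) (∑' k : ℕ, z ^ k / ((k : ℂ) + 1) ^ s) z := by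
  obtain ⟨r, hzr, hr1⟩ := exists_between hz
  have hr0 : 0 < r := (norm_nonneg z).trans_lt hzr
  unfold Li
  refine hasDerivAt_tsum_of_isPreconnected
    (g := fun (k : ℕ) (y : ℂ) => y ^ (k + 1) / ((k : ℂ) + 1) ^ (s + 1))
    (g' := fun (k : ℕ) (y : ℂ) => y ^ k / ((k : ℂ) + 1) ^ s)
    (summable_geometric_of_lt_one hr0.le hr1)
    Metric.isOpen_ball (convex_ball 0 r).isPreconnected (fun k y _ => ?_) (fun k y hy => ?_)
    (Metric.mem_ball_self hr0) (summable_Li_series _ (by simp)) (mem_ball_zero_iff.2 hzr)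
  · have hk : (k : ℂ) + 1 ≠ 0 := Nat.cast_add_one_ne_zero k
    refine ((hasDerivAt_pow (k + 1) y).div_const _).congr_deriv ?_
    push_cast
    field_simp
    ring
  · calc ‖y ^ k / ((k : ℂ) + 1) ^ s‖ ≤ ‖y‖ ^ k := by
          simpa using norm_div_natCast_add_one_pow_le s k (y ^ k)
      _ ≤ r ^ k := pow_le_pow_left₀ (norm_nonneg y) (mem_ball_zero_iff.1 hy).le k

lemma tsum_pow_div_natCast_add_one {z : ℂ} (hz : ‖z‖ < 1) (hz0 : z ≠ 0) :
    ∑' k : ℕ, z ^ k / ((k : ℂ) + 1) ^ 1 = -log (1 - z) / z := by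
  rw [eq_div_iff hz0, ← Li_one hz, Li, ← tsum_mul_right]
  exact tsum_congr fun k => by ring

lemma norm_lt_norm_sub_one_iff {z : ℂ} : ‖z‖ < ‖z - 1‖ ↔ z.re < 1 / 2 := by
  rw [← sq_lt_sq₀ (norm_nonneg _) (norm_nonneg _), ← normSq_eq_norm_sq, ← normSq_eq_norm_sq,
    normSq_apply, normSq_apply]
  simp only [sub_re, one_re, sub_im, one_im, sub_zero]
  constructor <;> intro h <;> nlinarith

lemma hasDerivAt_Li_two_add_Li_two_div_sub_one {x : ℂ} (hx : ‖x‖ < 1) (hre : x.re < 1 / 2) :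
    HasDerivAt (fun z => Li 2 z + Li 2 (z / (z - 1)) + log (1 - z) ^ 2 / 2) 0 x := by
  have hre' : 0 < (1 - x).re := by simp only [sub_re, one_re]; linarith
  have hslit : 1 - x ∈ slitPlane := mem_slitPlane_iff.2 (Or.inl hre')
  have hx1 : x - 1 ≠ 0 := sub_ne_zero.2 fun h => by rw [h] at hre; norm_num at hre
  have hψ : ‖x / (x - 1)‖ < 1 := by
    rw [norm_div, div_lt_one (norm_pos_iff.2 hx1)]
    exact norm_lt_norm_sub_one_iff.2 hre
  have dψ : HasDerivAt (fun z => z / (z - 1)) (-1 / (x - 1) ^ 2) x := by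
    refine ((hasDerivAt_id x).div ((hasDerivAt_id x).sub_const 1) hx1).congr_deriv ?_
    simp only [id]; ring
  have dlog : HasDerivAt (fun z => log (1 - z) ^ 2 / 2) (-log (1 - x) / (1 - x)) x := by
    have := (((hasDerivAt_id x).const_sub 1).clog hslit).pow 2
    refine (this.div_const 2).congr_deriv ?_
    simp only [id]; ring
  refine (((hasDerivAt_Li 1 hx).add ((hasDerivAt_Li 1 hψ).comp x dψ)).add dlog).congr_deriv ?_
  rcases eq_or_ne x 0 with rfl | hx0
  · simp
  have h1x : 1 - x ≠ 0 := slitPlane_ne_zero hslit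
  have hlogψ : log (1 - x / (x - 1)) = -log (1 - x) := by
    rw [← log_inv _ (slitPlane_arg_ne_pi hslit)]
    congr 1
    field_simp
    ring
  rw [tsum_pow_div_natCast_add_one hx hx0,
    tsum_pow_div_natCast_add_one hψ (div_ne_zero hx0 hx1), hlogψ]
  field_simp
  ring

theorem Li_two_add_Li_two_div_sub_one {z : ℂ} (hz : ‖z‖ < 1) (hre : z.re < 1 / 2) :
    Li 2 z + Li 2 (z / (z - 1)) = -log (1 - z) ^ 2 / 2 := by
  set U : Set ℂ := Metric.ball 0 1 ∩ {w | w.re < 1 / 2}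
  have hderiv : ∀ x ∈ U, HasDerivAt
      (fun z => Li 2 z + Li 2 (z / (z - 1)) + log (1 - z) ^ 2 / 2) 0 x := fun x hx =>
    hasDerivAt_Li_two_add_Li_two_div_sub_one (mem_ball_zero_iff.1 hx.1) hx.2
  have hU : IsOpen U := Metric.isOpen_ball.inter (isOpen_lt continuous_re continuous_const)
  have hconst := hU.is_const_of_deriv_eq_zero
    ((convex_ball 0 1).inter (convex_halfSpace_re_lt _)).isPreconnected
    (fun x hx => (hderiv x hx).differentiableAt.differentiableWithinAt)
    (fun x hx => (hderiv x hx).deriv) (x := z) (y := 0) ⟨mem_ball_zero_iff.2 hz, hre⟩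
    ⟨Metric.mem_ball_self one_pos, by norm_num⟩
  simp only [Li_zero, zero_div, sub_zero, log_one] at hconst
  linear_combination hconst

theorem Li_two_add_Li_two_of_add_eq_mul {z u : ℂ} (hz : ‖z‖ < 1) (hu : ‖u‖ < 1)
    (h : z + u = z * u) : Li 2 z + Li 2 u = -log (1 - z) ^ 2 / 2 := by
  have hz1 : z - 1 ≠ 0 := fun h1 => by
    rw [sub_eq_zero.1 h1] at h; simp at h
  have hu' : u = z / (z - 1) := by rw [eq_div_iff hz1]; linear_combination -h
  subst hu'
  refine Li_two_add_Li_two_div_sub_one hz (norm_lt_norm_sub_one_iff.1 ?_)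
  rwa [norm_div, div_lt_one (norm_pos_iff.2 hz1)] at hu

lemma norm_lt_one_of_normSq_lt_one {z : ℂ} (h : normSq z < 1) : ‖z‖ < 1 := by
  rwa [← sq_lt_one_iff₀ (norm_nonneg _), ← normSq_eq_norm_sq]

lemma Li_two_ladder :
    2 * (Li 2 (I / 2)).im - 2 * (Li 2 ((1 + I) / 4)).im - (Li 2 ((1 + I) / 8)).im
      = (log (1 + I / 2) ^ 2 + log ((3 - I) / 4) ^ 2 + log ((7 - I) / 8) ^ 2 / 2).im := by
  set w : ℂ := (-1 - 2 * I) / 5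
  have hw : ‖w‖ < 1 := norm_lt_one_of_normSq_lt_one (by norm_num [w, normSq_apply])
  have h₁ := Li_two_add_Li_two_of_add_eq_mul (z := (1 + I) / 4) (u := w)
    (norm_lt_one_of_normSq_lt_one (by norm_num [normSq_apply])) hw
    (by apply Complex.ext <;> norm_num [w])
  have h₂ := Li_two_add_Li_two_of_add_eq_mul (z := (1 + I) / 8) (u := (-3 - 4 * I) / 25)
    (norm_lt_one_of_normSq_lt_one (by norm_num [normSq_apply]))
    (norm_lt_one_of_normSq_lt_one (by norm_num [normSq_apply]))
    (by apply Complex.ext <;> norm_num)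
  have h₃ := Li_two_add_Li_two_of_add_eq_mul (z := -I / 2) (u := -w)
    (norm_lt_one_of_normSq_lt_one (by norm_num [normSq_apply])) (by rwa [norm_neg])
    (by apply Complex.ext <;> norm_num [w])
  have h₄ := Li_add_Li_neg 2 hw
  have h₅ : (-3 - 4 * I) / 25 = conj (w ^ 2) := by
    rw [Complex.ext_iff, conj_re, conj_im]; norm_num [w, pow_two]
  have h₆ : -I / 2 = conj (I / 2) := by
    rw [Complex.ext_iff, conj_re, conj_im]; norm_num
  rw [show 1 - (1 + I) / 4 = (3 - I) / 4 by ring] at h₁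
  rw [show 1 - (1 + I) / 8 = (7 - I) / 8 by ring, h₅, Li_conj] at h₂
  rw [show 1 - -I / 2 = 1 + I / 2 by ring, h₆, Li_conj] at h₃
  apply_fun im at h₁ h₂ h₃ h₄
  simp only [add_im, neg_im, div_ofNat_im, conj_im] at *
  norm_num at h₄
  linarith

lemma im_log_sq_of_re_pos {c : ℂ} (hc : 0 < c.re) :
    (log c ^ 2).im = Real.log (normSq c) * Real.arctan (c.im / c.re) := by
  have harg : |arg c| < π / 2 := abs_arg_lt_pi_div_two_iff.2 (Or.inl hc)
  rw [← tan_arg, Real.arctan_tan (neg_lt_of_abs_lt harg) (lt_of_abs_lt harg), sq, mul_im,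
    log_re, log_im, norm_def, Real.log_sqrt (normSq_nonneg c)]
  ring

lemma im_log_sq_ladder :
    (log (1 + I / 2) ^ 2 + log ((3 - I) / 4) ^ 2 + log ((7 - I) / 8) ^ 2 / 2).im
      = π * Real.log 2 / 8 := by
  simp only [add_im, div_ofNat_im]
  rw [im_log_sq_of_re_pos (by norm_num), im_log_sq_of_re_pos (by norm_num),
    im_log_sq_of_re_pos (by norm_num)]
  norm_num [normSq_apply, Real.arctan_neg]
  have hπ : π = 4 * (Real.arctan (1 / 2) + Real.arctan (1 / 3)) := by
    rw [Real.arctan_add (by norm_num)]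
    norm_num [Real.arctan_one]
    ring
  have harctan : Real.arctan (1 / 7) = Real.arctan (1 / 2) - Real.arctan (1 / 3) := by
    rw [eq_sub_iff_add_eq, Real.arctan_add (by norm_num)]
    norm_num
  have hlog (m n : ℕ) : Real.log (5 ^ m / 2 ^ n) = m * Real.log 5 - n * Real.log 2 := by
    rw [Real.log_div (by positivity) (by positivity), Real.log_pow, Real.log_pow]
  rw [hπ, harctan, show (5 / 4 : ℝ) = 5 ^ 1 / 2 ^ 2 by norm_num,
    show (5 / 8 : ℝ) = 5 ^ 1 / 2 ^ 3 by norm_num, show (25 / 32 : ℝ) = 5 ^ 2 / 2 ^ 5 by norm_num,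
    hlog, hlog, hlog]
  push_cast
  ring

lemma ofReal_one_div_mul_sqrt_two_mul_exp_pi_div_four_mul_I (c : ℝ) :
    ((1 / (c * √2) : ℝ) : ℂ) * exp (π / 4 * I) = (1 + I) / (2 * c) := by
  rw [exp_mul_I, ← ofReal_ofNat 4, ← ofReal_div, ← ofReal_cos, ← ofReal_sin, Real.cos_pi_div_four,
    Real.sin_pi_div_four]
  rcases eq_or_ne c 0 with rfl | hc
  · simp
  push_cast
  field_simp

theorem stmt5 : Real.pi * Real.log 2 / 8 = 2 * (Li 2 (((1/2 : ℝ) : ℂ) * Complex.exp ((Real.pi / 2) * Complex.I))).im - 2 * (Li 2 (((1 / (2 * Real.sqrt 2) : ℝ) : ℂ) * Complex.exp ((Real.pi / 4) * Complex.I))).im - (Li 2 (((1 / (4 * Real.sqrt 2) : ℝ) : ℂ) * Complex.exp ((Real.pi / 4) * Complex.I))).im := by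
  have hI : ((1 / 2 : ℝ) : ℂ) * exp (π / 2 * I) = I / 2 := by
    rw [exp_pi_div_two_mul_I]; push_cast; ring
  rw [hI, ofReal_one_div_mul_sqrt_two_mul_exp_pi_div_four_mul_I,
    ofReal_one_div_mul_sqrt_two_mul_exp_pi_div_four_mul_I]
  norm_num
  rw [Li_two_ladder, im_log_sq_ladder]
end
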